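/- arXiv:0804.1109 — 5 statements merged into one kernel-verified Lean document; each statement's English description precedes it below -/
import Mathlib

section
/- Let F_q be a finite field with q elements, let ψ : F_q → ℂ be a nontrivial additive character, let a, b be nonzero elements of F_q, and let f and g be nonzero elements of F_q of multiplicative orders s and t, respectively. Let r be a positive integer, and for each c ∈ F_q let N_c denote the number of pairs of integers (x, y) with 0 ≤ x ≤ s−1, 0 ≤ y ≤ r−1 and a·f^x + b·g^y = c. Then Σ_{c ∈ F_q} ( N_c − r·s/q )^2 = (1/q) · Σ_{λ ∈ F_q, λ ≠ 0} | Σ_{x=0}^{s−1} ψ(a·λ·f^x) |^2 · | Σ_{y=0}^{r−1} ψ(b·λ·g^y) |^2. -/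
/-!
Write `N c` for the number of pairs with `a f^x + b g^y = c`. Its Fourier coefficient
`∑_c N c ψ(λ c)` is `∑_{x,y} ψ(λ (a f^x + b g^y))`, which factorises into the two
exponential sums. Subtracting the mean `r s / q` from `N` kills the coefficient at `λ = 0`
and leaves the others unchanged, so the identity is Parseval's formula for `c ↦ N c - r s / q`.
-/

open Finset ComplexConjugate

namespace AddChar

section Product

variable {A M : Type*} [AddMonoid A] [CommSemiring M]

lemma sum_product_apply_add {ι κ : Type*} (s : Finset ι) (t : Finset κ) (ψ : AddChar A M)
    (u : ι → A) (v : κ → A) :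
    ∑ p ∈ s ×ˢ t, ψ (u p.1 + v p.2) = (∑ x ∈ s, ψ (u x)) * ∑ y ∈ t, ψ (v y) := by
  simp only [map_add_eq_mul, sum_product, sum_mul_sum]

end Product

variable {R : Type*} [CommRing R] [Fintype R] [DecidableEq R] {ψ : AddChar R ℂ}

lemma sum_apply_mul_sub (hψ : ψ.IsPrimitive) (c d : R) :
    ∑ l, ψ (l * (c - d)) = if c = d then (Fintype.card R : ℂ) else 0 := by
  simp [sum_mulShift _ hψ, sub_eq_zero]

lemma sum_norm_sq_eq_sum_norm_sq_sum_mul (hψ : ψ.IsPrimitive) (h : R → ℂ) :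
    ∑ c, ‖h c‖ ^ 2 = (∑ l, ‖∑ c, h c * ψ (l * c)‖ ^ 2) / Fintype.card R := by
  have hq : (Fintype.card R : ℂ) ≠ 0 := Nat.cast_ne_zero.2 Fintype.card_ne_zero
  apply Complex.ofReal_injective
  push_cast
  rw [eq_div_iff hq]
  calc (∑ c, (‖h c‖ : ℂ) ^ 2) * Fintype.card R
      = ∑ c, ∑ d, ∑ l, h c * conj (h d) * ψ (l * (c - d)) := by
        simp only [← mul_sum, sum_apply_mul_sub hψ, mul_ite, mul_zero, sum_ite_eq, mem_univ,
          if_true, Complex.mul_conj', sum_mul]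
    _ = ∑ l, ∑ c, ∑ d, h c * ψ (l * c) * (conj (h d) * ψ (-(l * d))) := by
        conv_rhs => rw [sum_comm]
        refine sum_congr rfl fun c _ => ?_
        conv_rhs => rw [sum_comm]
        refine sum_congr rfl fun d _ => sum_congr rfl fun l _ => ?_
        rw [mul_sub, sub_eq_add_neg, map_add_eq_mul]
        ring
    _ = ∑ l, (‖∑ c, h c * ψ (l * c)‖ : ℂ) ^ 2 := by
        simp only [← Complex.mul_conj', map_sum, map_mul, ← map_neg_eq_conj, sum_mul_sum]

lemma sum_card_fiber_mul_apply_mul {ι : Type*} (P : Finset ι) (φ : ι → R) (l : R) :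
    ∑ c, (#{p ∈ P | φ p = c} : ℂ) * ψ (l * c) = ∑ p ∈ P, ψ (l * φ p) := by
  rw [← sum_fiberwise' P φ (fun c => ψ (l * c))]
  simp only [sum_const, nsmul_eq_mul]

lemma sum_sq_card_fiber_sub_eq (hψ : ψ.IsPrimitive) {ι : Type*} (P : Finset ι) (φ : ι → R) :
    ∑ c, ((#{p ∈ P | φ p = c} : ℝ) - #P / Fintype.card R) ^ 2 =
      (∑ l ∈ univ.erase 0, ‖∑ p ∈ P, ψ (l * φ p)‖ ^ 2) / Fintype.card R := by
  have hq : (Fintype.card R : ℂ) ≠ 0 := Nat.cast_ne_zero.2 Fintype.card_ne_zero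
  set dev : R → ℂ := fun c => (#{p ∈ P | φ p = c} : ℂ) - #P / Fintype.card R
  have dev_fourier (l : R) :
      ∑ c, dev c * ψ (l * c) = if l = 0 then 0 else ∑ p ∈ P, ψ (l * φ p) := by
    simp only [dev, sub_mul, sum_sub_distrib, sum_card_fiber_mul_apply_mul, ← mul_sum]
    simp_rw [mul_comm l, sum_mulShift _ hψ]
    split_ifs with hl
    · simp [hl, hq]
    · simp
  calc ∑ c, ((#{p ∈ P | φ p = c} : ℝ) - #P / Fintype.card R) ^ 2
      = ∑ c, ‖dev c‖ ^ 2 := by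
        refine sum_congr rfl fun c _ => ?_
        rw [← sq_abs, ← Real.norm_eq_abs, ← Complex.norm_real]
        push_cast
        rfl
    _ = _ := by
        rw [sum_norm_sq_eq_sum_norm_sq_sum_mul hψ,
          ← sum_erase univ (a := 0) (by rw [dev_fourier, if_pos rfl, norm_zero, sq, mul_zero])]
        refine congrArg (· / _) (sum_congr rfl fun l hl => ?_)
        rw [dev_fourier, if_neg (ne_of_mem_erase hl)]

end AddChar

theorem stmt_2_general (F : Type) [Field F] [Fintype F] [DecidableEq F]
    (ψ : AddChar F ℂ) (hψ : ψ ≠ 1)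
    (a b f g : F) (s r : ℕ) :
    ∑ c : F,
        ((((Finset.range s ×ˢ Finset.range r).filter
              (fun p => a * f ^ p.1 + b * g ^ p.2 = c)).card : ℝ) -
          (r : ℝ) * s / (Fintype.card F : ℝ)) ^ 2 =
      (1 / (Fintype.card F : ℝ)) *
        ∑ l ∈ Finset.univ.erase (0 : F),
          ‖∑ x ∈ Finset.range s, ψ (a * l * f ^ x)‖ ^ 2 *
            ‖∑ y ∈ Finset.range r, ψ (b * l * g ^ y)‖ ^ 2 := by
  have h_card : (#(range s ×ˢ range r) : ℝ) = r * s := by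
    rw [card_product, card_range, card_range, Nat.cast_mul, mul_comm]
  have h_parseval := AddChar.sum_sq_card_fiber_sub_eq (AddChar.IsPrimitive.of_ne_one hψ)
    (range s ×ˢ range r) (fun p => a * f ^ p.1 + b * g ^ p.2)
  rw [← h_card, h_parseval, one_div_mul_eq_div]
  refine congrArg (· / _) (sum_congr rfl fun l _ => ?_)
  have h_split (p : ℕ × ℕ) :
      l * (a * f ^ p.1 + b * g ^ p.2) = a * l * f ^ p.1 + b * l * g ^ p.2 := by ring
  rw [sum_congr rfl fun p _ => congrArg ψ (h_split p), ← mul_pow, ← norm_mul]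
  exact congrArg (‖·‖ ^ 2)
    (AddChar.sum_product_apply_add _ _ ψ (a * l * f ^ ·) (b * l * g ^ ·))

/-- Variance identity: for a finite field `F_q`, a nontrivial additive character
`ψ : F_q → ℂ`, nonzero `a, b` and nonzero `f, g` of multiplicative orders `s, t`,
and a positive integer `r`, with `N_c` the number of pairs `(x, y)`,
`0 ≤ x ≤ s-1`, `0 ≤ y ≤ r-1`, with `a·f^x + b·g^y = c`:
`Σ_c (N_c − r·s/q)² = (1/q)·Σ_{λ≠0} |Σ_x ψ(aλf^x)|²·|Σ_y ψ(bλg^y)|²`. -/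
theorem stmt_2 (F : Type) [Field F] [Fintype F] [DecidableEq F]
    (ψ : AddChar F ℂ) (hψ : ψ ≠ 1)
    (a b f g : F) (s t r : ℕ)
    (ha : a ≠ 0) (hb : b ≠ 0) (hf : f ≠ 0) (hg : g ≠ 0)
    (hs : orderOf f = s) (ht : orderOf g = t) (hr : 0 < r) :
    ∑ c : F,
        ((((Finset.range s ×ˢ Finset.range r).filter
              (fun p => a * f ^ p.1 + b * g ^ p.2 = c)).card : ℝ) -
          (r : ℝ) * s / (Fintype.card F : ℝ)) ^ 2 =
      (1 / (Fintype.card F : ℝ)) *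
        ∑ l ∈ Finset.univ.erase (0 : F),
          ‖∑ x ∈ Finset.range s, ψ (a * l * f ^ x)‖ ^ 2 *
            ‖∑ y ∈ Finset.range r, ψ (b * l * g ^ y)‖ ^ 2 :=
  stmt_2_general F ψ hψ a b f g s r
end

section
/- Let F_q be a finite field with q elements, let ψ : F_q → ℂ be a nontrivial additive character, let α be a nonzero element of F_q, and let f be a nonzero element of F_q of multiplicative order s. Then | Σ_{x=0}^{s−1} ψ(α·f^x) | ≤ q^{1/2}. -/
/-!
Let `T β = ∑_{h ∈ H} ψ(β h)` for `H = ⟨f⟩ ≤ F_qˣ`. Orthogonality of the characters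
`β ↦ ψ(β c)` gives the second moment `∑_β |T β|² = q |H|`. Since `T` is constant on each coset
`α H`, which for `α ≠ 0` has `|H|` elements, the coset of `α` alone contributes `|H| |T α|²`
to this sum, so `|T α|² ≤ q`.
-/

open Finset

theorem IsOfFinOrder.sum_range_orderOf_pow_eq_sum_zpowers {G M : Type*} [Group G]
    [AddCommMonoid M] {x : G} (hx : IsOfFinOrder x) [Fintype (Subgroup.zpowers x)]
    (g : G → M) : ∑ i ∈ range (orderOf x), g (x ^ i) = ∑ h : Subgroup.zpowers x, g h := by
  rw [← Fin.sum_univ_eq_sum_range (fun i => g (x ^ i))]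
  exact Fintype.sum_equiv (finEquivZPowers hx) _ _ fun _ => rfl

namespace AddChar

theorem sum_norm_sq_sum_mul_eq_card_mul_card {R ι : Type*} [CommRing R] [Fintype R] [Fintype ι]
    {ψ : AddChar R ℂ} (hψ : ψ.IsPrimitive) {g : ι → R} (hg : Function.Injective g) :
    ∑ β : R, ‖∑ i, ψ (β * g i)‖ ^ 2 = Fintype.card R * Fintype.card ι := by
  classical
  have hexpand : ∀ β : R, ((‖∑ i, ψ (β * g i)‖ ^ 2 : ℝ) : ℂ)
      = ∑ i, ∑ j, ψ (β * (g i - g j)) := fun β => by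
    rw [Complex.ofReal_pow, ← Complex.mul_conj', map_sum, sum_mul_sum]
    refine sum_congr rfl fun i _ => sum_congr rfl fun j _ => ?_
    rw [← map_neg_eq_conj, ← map_add_eq_mul, mul_sub, sub_eq_add_neg]
  have horth : ∀ i j, ∑ β : R, ψ (β * (g i - g j)) = if i = j then (Fintype.card R : ℂ) else 0 :=
    fun i j => by rw [sum_mulShift _ hψ]; simp [sub_eq_zero, hg.eq_iff]
  apply Complex.ofReal_injective
  rw [Complex.ofReal_sum]
  simp only [hexpand]
  rw [sum_comm]
  push_cast
  simp only [sum_comm (γ := R), horth, sum_ite_eq, mem_univ, if_true, sum_const, card_univ,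
    nsmul_eq_mul]
  ring

theorem sum_subgroup_mul_mul_eq {R : Type*} [Ring R] (ψ : AddChar R ℂ)
    {H : Subgroup Rˣ} [Fintype H] (β : R) (u : H) :
    ∑ h : H, ψ (β * (u : Rˣ) * (h : Rˣ)) = ∑ h : H, ψ (β * (h : Rˣ)) :=
  Fintype.sum_equiv (Equiv.mulLeft u) _ _ fun h => by simp [mul_assoc]

theorem norm_sum_subgroup_mul_le_sqrt_card {F : Type*} [Field F] [Fintype F]
    {ψ : AddChar F ℂ} (hψ : ψ ≠ 1) (H : Subgroup Fˣ) [Fintype H] {α : F} (hα : α ≠ 0) :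
    ‖∑ h : H, ψ (α * (h : Fˣ))‖ ≤ √(Fintype.card F) := by
  classical
  set T : F → ℝ := fun β => ‖∑ h : H, ψ (β * (h : Fˣ))‖ ^ 2
  have hcoset : ∑ u : H, T (α * (u : Fˣ)) = Fintype.card H * T α := by
    simp only [T, sum_subgroup_mul_mul_eq, sum_const, card_univ, nsmul_eq_mul]
  have hinj : Function.Injective fun u : H => α * (u : Fˣ) :=
    fun u v huv => Subtype.ext <| Units.ext <| mul_left_cancel₀ hα huv
  have hH : (0 : ℝ) < Fintype.card H := by exact_mod_cast Fintype.card_pos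
  refine Real.le_sqrt_of_sq_le (le_of_mul_le_mul_left ?_ hH)
  calc (Fintype.card H : ℝ) * T α = ∑ u : H, T (α * (u : Fˣ)) := hcoset.symm
    _ ≤ ∑ β : F, T β := by
      rw [← sum_image fun u _ v _ huv => hinj huv]
      exact sum_le_univ_sum_of_nonneg fun β => by positivity
    _ = Fintype.card F * Fintype.card H :=
      sum_norm_sq_sum_mul_eq_card_mul_card (IsPrimitive.of_ne_one hψ)
        (Units.val_injective.comp Subtype.val_injective)
    _ = Fintype.card H * Fintype.card F := mul_comm _ _

end AddChar

/-- For a finite field `F_q`, a nontrivial additive character `ψ : F_q → ℂ`,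
a nonzero `α ∈ F_q`, and a nonzero `f ∈ F_q` of multiplicative order `s`:
`|Σ_{x=0}^{s-1} ψ(α·f^x)| ≤ q^{1/2}`. -/
theorem stmt_3 (F : Type) [Field F] [Fintype F]
    (ψ : AddChar F ℂ) (hψ : ψ ≠ 1)
    (α f : F) (s : ℕ)
    (hα : α ≠ 0) (hf : f ≠ 0) (hs : orderOf f = s) :
    ‖∑ x ∈ Finset.range s, ψ (α * f ^ x)‖ ≤ Real.sqrt (Fintype.card F) := by
  classical
  have hs' : orderOf (Units.mk0 f hf) = s := by rw [← orderOf_units, Units.val_mk0, hs]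
  have hsum := (isOfFinOrder_of_finite (Units.mk0 f hf)).sum_range_orderOf_pow_eq_sum_zpowers
    fun u : Fˣ => ψ (α * u)
  simp only [Units.val_pow_eq_pow_val, Units.val_mk0, hs'] at hsum
  rw [hsum]
  exact AddChar.norm_sum_subgroup_mul_le_sqrt_card hψ _ hα
end

section
/- Let F_q be a finite field with q elements, let a, b be nonzero elements of F_q, and let f and g be nonzero elements of F_q of multiplicative orders s and t, respectively. Let r be a positive integer with r ≤ t, and for each c ∈ F_q let N_c denote the number of pairs of integers (x, y) with 0 ≤ x ≤ s−1, 0 ≤ y ≤ r−1 and a·f^x + b·g^y = c. Then Σ_{c ∈ F_q} ( N_c − r·s/q )^2 ≤ q·r. -/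
/-!
Let `ψ` be a primitive additive character, `Ŝ(u) = ∑_{x ∈ S} ψ(x u)`, and let `N_c` count the
representations `c = x + y` with `x ∈ S = a⟨f⟩` and `y ∈ T = {b g^y : y < r}` (these sets have
`s` and `r` elements). Orthogonality gives `q N_c = ∑_u Ŝ(u) T̂(u) ψ(-u c)`, whose `u = 0` term
is `s r`, so Plancherel turns the left-hand side into `q⁻¹ ∑_{u ≠ 0} |Ŝ(u)|² |T̂(u)|²`.
As `S` is a coset of `⟨f⟩`, `Ŝ` takes the same value at the `s` distinct points `u f^j`, and
Parseval `∑_u |Ŝ(u)|² = q s` forces `|Ŝ(u)|² ≤ q` for `u ≠ 0`; Parseval for `T` finishes.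
-/

open Finset Complex ComplexConjugate

theorem Finset.addConvolution_image_image {α β G : Type*} [AddGroup G] [DecidableEq G]
    {φ : α → G} {χ : β → G} {A : Finset α} {B : Finset β} (hφ : Set.InjOn φ A)
    (hχ : Set.InjOn χ B) (c : G) :
    (A.image φ).addConvolution (B.image χ) c = #{p ∈ A ×ˢ B | φ p.1 + χ p.2 = c} := by
  rw [← card_add_eq, ← prodMap_image_product, filter_image, card_image_of_injOn]
  · rfl
  · refine (hφ.prodMap hχ).mono ?_
    rw [← coe_product]
    exact coe_subset.2 (filter_subset _ _)

theorem injOn_mul_pow_range {M₀ : Type*} [MonoidWithZero M₀] [IsLeftCancelMulZero M₀] {a : M₀}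
    (ha : a ≠ 0) (f : M₀) {n : ℕ} (hn : n ≤ orderOf f) : Set.InjOn (a * f ^ ·) (range n) :=
  fun _ hi _ hj hij => pow_injOn_Iio_orderOf (lt_of_lt_of_le (mem_range.1 hi) hn)
    (lt_of_lt_of_le (mem_range.1 hj) hn) (mul_left_cancel₀ ha hij)

theorem mul_mem_image_mul_pow_range_orderOf {M : Type*} [CommMonoid M] [DecidableEq M]
    (a f : M) :
    ∀ x ∈ (range (orderOf f)).image (a * f ^ ·),
      f * x ∈ (range (orderOf f)).image (a * f ^ ·) := by
  simp only [mem_image, mem_range, forall_exists_index, and_imp, forall_apply_eq_imp_iff₂]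
  intro i hi
  exact ⟨(i + 1) % orderOf f, Nat.mod_lt _ (by omega), by rw [pow_mod_orderOf, pow_succ]; ac_rfl⟩

section Plancherel

variable {F : Type*} [Field F]

def expSum (ψ : AddChar F ℂ) (S : Finset F) (u : F) : ℂ := ∑ x ∈ S, ψ (x * u)

@[simp]
theorem expSum_zero (ψ : AddChar F ℂ) (S : Finset F) : expSum ψ S 0 = #S := by
  simp [expSum]

variable [Fintype F] [DecidableEq F] {ψ : AddChar F ℂ}

theorem sum_normSq_sum_mul_addChar (hψ : ψ.IsPrimitive) (A : Finset F)
    (h : F → ℂ) :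
    ∑ c, normSq (∑ u ∈ A, h u * ψ (u * c)) = Fintype.card F * ∑ u ∈ A, normSq (h u) := by
  have hchar (u v c : F) : ψ (u * c) * conj (ψ (v * c)) = ψ (c * (u - v)) := by
    rw [← AddChar.map_neg_eq_conj, ← AddChar.map_add_eq_mul]
    congr 1
    ring
  apply ofReal_injective
  push_cast
  simp_rw [← mul_conj, map_sum, map_mul, sum_mul_sum]
  calc ∑ c, ∑ u ∈ A, ∑ v ∈ A, h u * ψ (u * c) * (conj (h v) * conj (ψ (v * c)))
      = ∑ u ∈ A, ∑ v ∈ A, h u * conj (h v) * ∑ c, ψ (c * (u - v)) := by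
        rw [sum_comm]
        refine sum_congr rfl fun u _ => ?_
        rw [sum_comm]
        refine sum_congr rfl fun v _ => ?_
        rw [mul_sum]
        refine sum_congr rfl fun c _ => ?_
        rw [← hchar]
        ring
    _ = Fintype.card F * ∑ u ∈ A, h u * conj (h u) := by
        simp_rw [AddChar.sum_mulShift _ hψ, sub_eq_zero, Nat.cast_ite, Nat.cast_zero, mul_ite,
          mul_zero, sum_ite_eq, mul_sum]
        exact sum_congr rfl fun u hu => by rw [if_pos hu, mul_comm]

theorem sum_normSq_expSum (hψ : ψ.IsPrimitive) (S : Finset F) :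
    ∑ u, normSq (expSum ψ S u) = Fintype.card F * #S := by
  simpa [expSum] using sum_normSq_sum_mul_addChar hψ S 1

theorem card_mul_addConvolution (hψ : ψ.IsPrimitive) (S T : Finset F) (c : F) :
    Fintype.card F * (S.addConvolution T c : ℂ) =
      ∑ u, expSum ψ S u * expSum ψ T u * ψ (u * -c) := by
  have hexpand (u : F) : expSum ψ S u * expSum ψ T u * ψ (u * -c) =
      ∑ p ∈ S ×ˢ T, ψ (u * (p.1 + p.2 - c)) := by
    rw [expSum, expSum, sum_mul_sum, sum_product, sum_mul]
    refine sum_congr rfl fun x _ => ?_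
    rw [sum_mul]
    refine sum_congr rfl fun y _ => ?_
    rw [← AddChar.map_add_eq_mul, ← AddChar.map_add_eq_mul]
    congr 1
    ring
  simp_rw [hexpand]
  rw [sum_comm]
  simp_rw [AddChar.sum_mulShift _ hψ, sub_eq_zero, Nat.cast_ite, Nat.cast_zero, sum_ite,
    sum_const_zero, add_zero, sum_const, nsmul_eq_mul]
  exact mul_comm _ _

theorem addConvolution_sub_eq_sum_expSum (hψ : ψ.IsPrimitive) (S T : Finset F) (c : F) :
    (S.addConvolution T c : ℂ) - #S * #T / Fintype.card F =
      (Fintype.card F : ℂ)⁻¹ * ∑ u ∈ univ.erase 0, expSum ψ S u * expSum ψ T u * ψ (u * -c) := by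
  have hq : (Fintype.card F : ℂ) ≠ 0 := by simp
  have h := card_mul_addConvolution hψ S T c
  rw [← add_sum_erase _ _ (mem_univ 0)] at h
  simp only [expSum_zero, zero_mul, AddChar.map_zero_eq_one, mul_one] at h
  rw [eq_inv_mul_iff_mul_eq₀ hq, mul_sub, h, mul_div_cancel₀ _ hq]
  ring

theorem sum_sq_addConvolution_sub_eq (hψ : ψ.IsPrimitive) (S T : Finset F) :
    ∑ c, ((S.addConvolution T c : ℝ) - #S * #T / Fintype.card F) ^ 2 =
      (Fintype.card F : ℝ)⁻¹ *
        ∑ u ∈ univ.erase 0, normSq (expSum ψ S u) * normSq (expSum ψ T u) := by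
  have hterm (c : F) : ((S.addConvolution T c : ℝ) - #S * #T / Fintype.card F) ^ 2 =
      (Fintype.card F : ℝ)⁻¹ ^ 2 *
        normSq (∑ u ∈ univ.erase 0, expSum ψ S u * expSum ψ T u * ψ (u * -c)) := by
    rw [sq, ← normSq_ofReal]
    push_cast
    rw [addConvolution_sub_eq_sum_expSum hψ, normSq_mul, normSq_inv, normSq_natCast]
    ring
  simp_rw [hterm, ← mul_sum]
  have hneg : ∑ c, normSq (∑ u ∈ univ.erase 0, expSum ψ S u * expSum ψ T u * ψ (u * -c)) =
      ∑ c, normSq (∑ u ∈ univ.erase 0, expSum ψ S u * expSum ψ T u * ψ (u * c)) :=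
    Fintype.sum_equiv (Equiv.neg F) _ _ fun _ => rfl
  rw [hneg, sum_normSq_sum_mul_addChar hψ]
  simp_rw [normSq_mul]
  field_simp

theorem sum_sq_addConvolution_sub_le (hψ : ψ.IsPrimitive) (S T : Finset F)
    {M : ℝ} (hM : ∀ u ≠ 0, normSq (expSum ψ S u) ≤ M) :
    ∑ c, ((S.addConvolution T c : ℝ) - #S * #T / Fintype.card F) ^ 2 ≤ M * #T := by
  have hq : (0 : ℝ) < Fintype.card F := by exact_mod_cast Fintype.card_pos
  have hM₀ : 0 ≤ M := (normSq_nonneg _).trans (hM 1 one_ne_zero)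
  rw [sum_sq_addConvolution_sub_eq hψ, inv_mul_le_iff₀ hq]
  calc ∑ u ∈ univ.erase 0, normSq (expSum ψ S u) * normSq (expSum ψ T u)
      ≤ ∑ u ∈ univ.erase 0, M * normSq (expSum ψ T u) :=
        sum_le_sum fun u hu =>
          mul_le_mul_of_nonneg_right (hM u (ne_of_mem_erase hu)) (normSq_nonneg _)
    _ ≤ ∑ u, M * normSq (expSum ψ T u) :=
        sum_le_sum_of_subset_of_nonneg (subset_univ _) fun _ _ _ =>
          mul_nonneg hM₀ (normSq_nonneg _)
    _ = Fintype.card F * (M * #T) := by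
        rw [← mul_sum, sum_normSq_expSum hψ]
        ring

end Plancherel

section Coset

variable {F : Type*} [Field F] [DecidableEq F] {S : Finset F} {f : F}

theorem expSum_mul_eq (ψ : AddChar F ℂ) (hf : f ≠ 0) (hS : ∀ x ∈ S, f * x ∈ S) (u : F) :
    expSum ψ S (u * f) = expSum ψ S u := by
  have himage : S.image (f * ·) = S :=
    eq_of_subset_of_card_le (image_subset_iff.2 hS)
      (card_image_of_injective _ (mul_right_injective₀ hf)).ge
  calc expSum ψ S (u * f) = ∑ x ∈ S, ψ (f * x * u) :=
        sum_congr rfl fun x _ => congr_arg ψ (by ring)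
    _ = ∑ y ∈ S.image (f * ·), ψ (y * u) :=
        (sum_image (f := fun y => ψ (y * u)) (mul_right_injective₀ hf).injOn).symm
    _ = expSum ψ S u := by rw [himage, expSum]

theorem expSum_mul_pow_eq (ψ : AddChar F ℂ) (hf : f ≠ 0) (hS : ∀ x ∈ S, f * x ∈ S) (u : F)
    (n : ℕ) : expSum ψ S (u * f ^ n) = expSum ψ S u := by
  induction n with
  | zero => rw [pow_zero, mul_one]
  | succ n ih => rw [pow_succ, ← mul_assoc, expSum_mul_eq ψ hf hS, ih]

variable [Fintype F] {ψ : AddChar F ℂ}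

theorem orderOf_mul_normSq_expSum_le (hψ : ψ.IsPrimitive) (hS : ∀ x ∈ S, f * x ∈ S) {u : F}
    (hu : u ≠ 0) : orderOf f * normSq (expSum ψ S u) ≤ Fintype.card F * #S := by
  rcases (orderOf f).eq_zero_or_pos with h0 | hpos
  · rw [h0, Nat.cast_zero, zero_mul]
    positivity
  have hf : f ≠ 0 := (orderOf_pos_iff.1 hpos).isUnit.ne_zero
  calc orderOf f * normSq (expSum ψ S u)
      = ∑ j ∈ range (orderOf f), normSq (expSum ψ S (u * f ^ j)) := by
        simp [expSum_mul_pow_eq ψ hf hS]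
    _ = ∑ v ∈ (range (orderOf f)).image (u * f ^ ·), normSq (expSum ψ S v) :=
        (sum_image (f := fun v => normSq (expSum ψ S v))
          (injOn_mul_pow_range hu f le_rfl)).symm
    _ ≤ ∑ v, normSq (expSum ψ S v) :=
        sum_le_sum_of_subset_of_nonneg (subset_univ _) fun _ _ _ => normSq_nonneg _
    _ = Fintype.card F * #S := sum_normSq_expSum hψ S

theorem normSq_expSum_image_mul_pow_le (hψ : ψ.IsPrimitive) {a : F} (ha : a ≠ 0) {u : F}
    (hu : u ≠ 0) :
    normSq (expSum ψ ((range (orderOf f)).image (a * f ^ ·)) u) ≤ Fintype.card F := by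
  rcases (orderOf f).eq_zero_or_pos with h0 | hpos
  · simp [h0, expSum]
  have hbound := orderOf_mul_normSq_expSum_le hψ (mul_mem_image_mul_pow_range_orderOf a f) hu
  rw [card_image_of_injOn (injOn_mul_pow_range ha f le_rfl), card_range, mul_comm] at hbound
  exact le_of_mul_le_mul_right hbound (by exact_mod_cast hpos)

end Coset

theorem stmt_5_general (F : Type) [Field F] [Fintype F] [DecidableEq F]
    (a b f g : F) (s t r : ℕ)
    (ha : a ≠ 0) (hb : b ≠ 0)
    (hs : orderOf f = s) (ht : orderOf g = t) (hrt : r ≤ t) :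
    ∑ c : F,
        ((((Finset.range s ×ˢ Finset.range r).filter
              (fun p => a * f ^ p.1 + b * g ^ p.2 = c)).card : ℝ) -
          (r : ℝ) * s / (Fintype.card F : ℝ)) ^ 2 ≤
      (Fintype.card F : ℝ) * r := by
  obtain ⟨ψ, hψ⟩ : ∃ ψ : AddChar F ℂ, ψ.IsPrimitive :=
    ⟨_, AddChar.FiniteField.primitiveChar_to_Complex_isPrimitive F⟩
  subst hs ht
  set S := (range (orderOf f)).image (a * f ^ ·)
  set T := (range r).image (b * g ^ ·)
  have hS : #S = orderOf f :=
    (card_image_of_injOn (injOn_mul_pow_range ha f le_rfl)).trans (card_range _)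
  have hT : #T = r :=
    (card_image_of_injOn (injOn_mul_pow_range hb g hrt)).trans (card_range _)
  have hN (c : F) : #{p ∈ range (orderOf f) ×ˢ range r | a * f ^ p.1 + b * g ^ p.2 = c} =
      S.addConvolution T c :=
    (addConvolution_image_image (injOn_mul_pow_range ha f le_rfl)
      (injOn_mul_pow_range hb g hrt) c).symm
  simp_rw [hN, ← hS, ← hT, mul_comm (#T : ℝ)]
  exact sum_sq_addConvolution_sub_le hψ S T fun u hu => normSq_expSum_image_mul_pow_le hψ ha hu

/-- For a finite field `F_q`, nonzero `a, b ∈ F_q`, nonzero `f, g ∈ F_q` of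
multiplicative orders `s, t`, and a positive integer `r ≤ t`, with `N_c` the number
of pairs `(x, y)`, `0 ≤ x ≤ s-1`, `0 ≤ y ≤ r-1`, with `a·f^x + b·g^y = c`:
`Σ_{c ∈ F_q} (N_c − r·s/q)² ≤ q·r`. -/
theorem stmt_5 (F : Type) [Field F] [Fintype F] [DecidableEq F]
    (a b f g : F) (s t r : ℕ)
    (ha : a ≠ 0) (hb : b ≠ 0) (hf : f ≠ 0) (hg : g ≠ 0)
    (hs : orderOf f = s) (ht : orderOf g = t) (hr : 0 < r) (hrt : r ≤ t) :
    ∑ c : F,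
        ((((Finset.range s ×ˢ Finset.range r).filter
              (fun p => a * f ^ p.1 + b * g ^ p.2 = c)).card : ℝ) -
          (r : ℝ) * s / (Fintype.card F : ℝ)) ^ 2 ≤
      (Fintype.card F : ℝ) * r :=
  stmt_5_general F a b f g s t r ha hb hs ht hrt
end

section
/- Let F_q be a finite field with q elements, let a, b be nonzero elements of F_q, and let f and g be nonzero elements of F_q of multiplicative orders s and t, respectively. Let r be a positive integer with r ≤ t, and for each c ∈ F_q let N_c denote the number of pairs of integers (x, y) with 0 ≤ x ≤ s−1, 0 ≤ y ≤ r−1 and a·f^x + b·g^y = c. Then for every real δ > 0, the number of elements c ∈ F_q with | N_c − r·s/q | ≥ δ·√r is at most q/δ^2. -/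
/-!
Detect `a f^x + b g^y = c` with a primitive additive character `ψ` of `F`. Parseval's identity,
applied to `c ↦ N_c - rs/q`, whose zero frequency vanishes, gives
`q ∑_c (N_c - rs/q)^2 = ∑_{u ≠ 0} |S(ua)|^2 |T(ub)|^2` with `S(v) = ∑_{x<s} ψ(v f^x)` and
`T(v) = ∑_{y<r} ψ(v g^y)`. Since `S` sums over a full orbit of `⟨f⟩`, it is constant on the
coset `v⟨f⟩`, which has `s` elements when `v ≠ 0`; so `s |S(v)|^2 ≤ ∑_w |S(w)|^2 = qs` by
Parseval, i.e. `|S(v)|^2 ≤ q`. Parseval also gives `∑_u |T(u)|^2 = qr`, the `g^y` with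
`y < r ≤ t` being distinct. Hence the variance is at most `qr`, and Chebyshev's inequality
concludes.
-/

open Finset ComplexConjugate

namespace AddChar

variable {R : Type*} [CommRing R] [Fintype R] [DecidableEq R] {ψ : AddChar R ℂ}

theorem sum_norm_sq_sum_mul_apply_mul (hψ : ψ.IsPrimitive) (D : Finset R) (A : R → ℂ) :
    ∑ u, ‖∑ c ∈ D, A c * ψ (u * c)‖ ^ 2 = Fintype.card R * ∑ c ∈ D, ‖A c‖ ^ 2 := by
  have orthogonality (c d : R) :
      ∑ u, ψ (u * c) * conj (ψ (u * d)) = if c = d then (Fintype.card R : ℂ) else 0 := by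
    simp_rw [← map_neg_eq_conj, ← map_add_eq_mul, ← mul_neg, ← mul_add, ← sub_eq_add_neg,
      sum_mulShift _ hψ, sub_eq_zero]
    split_ifs <;> simp
  apply Complex.ofReal_injective
  push_cast
  simp_rw [← Complex.mul_conj', map_sum, map_mul, sum_mul_sum]
  calc ∑ u, ∑ c ∈ D, ∑ d ∈ D, A c * ψ (u * c) * (conj (A d) * conj (ψ (u * d)))
      = ∑ c ∈ D, ∑ d ∈ D, A c * conj (A d) * ∑ u, ψ (u * c) * conj (ψ (u * d)) := by
        simp_rw [mul_sum, mul_mul_mul_comm]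
        rw [sum_comm]
        exact sum_congr rfl fun _ _ => sum_comm
    _ = Fintype.card R * ∑ c ∈ D, A c * conj (A c) := by
        simp_rw [orthogonality, mul_ite, mul_zero, sum_ite_eq, mul_sum]
        exact sum_congr rfl fun c hc => by simp [hc, mul_comm]

theorem card_mul_sum_sq_sub_mean (hψ : ψ.IsPrimitive) (N : R → ℝ) :
    Fintype.card R * ∑ c, (N c - (∑ d, N d) / Fintype.card R) ^ 2 =
      ∑ u ∈ univ.erase 0, ‖∑ c, (N c : ℂ) * ψ (u * c)‖ ^ 2 := by
  set m := (∑ d, N d) / Fintype.card R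
  have hq : (Fintype.card R : ℝ) ≠ 0 := by positivity
  have transform (u : R) : ∑ c, ((N c - m : ℝ) : ℂ) * ψ (u * c) =
      ∑ c, (N c : ℂ) * ψ (u * c) - if u = 0 then ((m * Fintype.card R : ℝ) : ℂ) else 0 := by
    have := sum_mulShift u hψ
    simp_rw [mul_comm _ u] at this
    push_cast
    simp_rw [sub_mul, sum_sub_distrib, ← mul_sum, this]
    split_ifs <;> simp
  have zero_frequency : ∑ c, (N c : ℂ) * ψ (0 * c) - ((m * Fintype.card R : ℝ) : ℂ) = 0 := by
    simp [m, hq]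
  have parseval := sum_norm_sq_sum_mul_apply_mul hψ univ fun c => ((N c - m : ℝ) : ℂ)
  simp_rw [Complex.norm_real, Real.norm_eq_abs, sq_abs, transform] at parseval
  rw [← parseval, ← add_sum_erase _ _ (mem_univ 0)]
  simp only [if_true, zero_frequency, norm_zero]
  rw [zero_pow two_ne_zero, zero_add]
  exact sum_congr rfl fun u hu => by rw [if_neg (ne_of_mem_erase hu), sub_zero]

theorem card_mul_sum_sq_card_filter_sub {ι : Type*} (hψ : ψ.IsPrimitive) (P : Finset ι)
    (φ : ι → R) :
    Fintype.card R * ∑ c, ((#{p ∈ P | φ p = c} : ℝ) - #P / Fintype.card R) ^ 2 =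
      ∑ u ∈ univ.erase 0, ‖∑ p ∈ P, ψ (u * φ p)‖ ^ 2 := by
  have fourier (u : R) :
      ∑ c, ((#{p ∈ P | φ p = c} : ℝ) : ℂ) * ψ (u * c) = ∑ p ∈ P, ψ (u * φ p) := by
    rw [← sum_fiberwise P φ]
    refine sum_congr rfl fun c _ => ?_
    rw [sum_congr rfl fun p hp => by rw [(mem_filter.1 hp).2], sum_const, nsmul_eq_mul]
    simp
  rw [card_eq_sum_card_fiberwise (fun p _ => mem_univ (φ p)), Nat.cast_sum,
    card_mul_sum_sq_sub_mean hψ]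
  simp_rw [fourier]

theorem sum_norm_sq_sum_range_pow (hψ : ψ.IsPrimitive) (f : R) {n : ℕ} (hn : n ≤ orderOf f) :
    ∑ v, ‖∑ x ∈ range n, ψ (v * f ^ x)‖ ^ 2 = Fintype.card R * n := by
  have hinj : Set.InjOn (f ^ ·) (range n) := fun x hx y hy =>
    pow_injOn_Iio_orderOf ((mem_range.1 hx).trans_le hn) ((mem_range.1 hy).trans_le hn)
  simpa only [sum_image hinj, one_mul, norm_one, one_pow, sum_const, card_range, nsmul_one] using
    sum_norm_sq_sum_mul_apply_mul hψ ((range n).image (f ^ ·)) fun _ => 1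

end AddChar

theorem Finset.sum_range_orderOf_pow_succ {M β : Type*} [Monoid M] [AddCancelCommMonoid β] (f : M)
    (h : M → β) :
    ∑ x ∈ range (orderOf f), h (f ^ (x + 1)) = ∑ x ∈ range (orderOf f), h (f ^ x) := by
  have := (sum_range_succ' (fun x => h (f ^ x)) (orderOf f)).symm.trans
    (sum_range_succ (fun x => h (f ^ x)) (orderOf f))
  rwa [pow_orderOf_eq_one, pow_zero, add_left_inj] at this

namespace AddChar

variable {F : Type*} [Field F] [Fintype F] [DecidableEq F] {ψ : AddChar F ℂ}

theorem norm_sq_sum_range_orderOf_le (hψ : ψ.IsPrimitive) (f : F) {v : F} (hv : v ≠ 0) :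
    ‖∑ x ∈ range (orderOf f), ψ (v * f ^ x)‖ ^ 2 ≤ Fintype.card F := by
  set S : F → ℂ := fun w => ∑ x ∈ range (orderOf f), ψ (w * f ^ x)
  have shift (w : F) : S (w * f) = S w := by
    simp only [S]
    rw [← sum_range_orderOf_pow_succ f fun y => ψ (w * y)]
    exact sum_congr rfl fun x _ => by ring_nf
  have invariant (k : ℕ) : S (v * f ^ k) = S v := by
    induction k with
    | zero => simp
    | succ k ih => rw [pow_succ, ← mul_assoc, shift, ih]
  have hinj : Set.InjOn (v * f ^ ·) (range (orderOf f)) := fun x hx y hy hxy =>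
    pow_injOn_Iio_orderOf (mem_range.1 hx) (mem_range.1 hy) (mul_left_cancel₀ hv hxy)
  have key : orderOf f * ‖S v‖ ^ 2 ≤ Fintype.card F * orderOf f :=
    calc orderOf f * ‖S v‖ ^ 2 = ∑ k ∈ range (orderOf f), ‖S (v * f ^ k)‖ ^ 2 := by
          simp [invariant]
      _ = ∑ w ∈ (range (orderOf f)).image (v * f ^ ·), ‖S w‖ ^ 2 :=
          (sum_image (f := fun w => ‖S w‖ ^ 2) hinj).symm
      _ ≤ ∑ w, ‖S w‖ ^ 2 := sum_le_univ_sum_of_nonneg fun _ => by positivity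
      _ = Fintype.card F * orderOf f := sum_norm_sq_sum_range_pow hψ f le_rfl
  rcases (orderOf f).eq_zero_or_pos with h0 | hpos
  · simp [h0]
  · rw [mul_comm] at key
    exact le_of_mul_le_mul_right key (by exact_mod_cast hpos)

end AddChar

theorem Finset.card_filter_le_abs_mul_sq_le_sum_sq {ι : Type*} (s : Finset ι) (g : ι → ℝ)
    {ε : ℝ} (hε : 0 ≤ ε) : #{i ∈ s | ε ≤ |g i|} * ε ^ 2 ≤ ∑ i ∈ s, g i ^ 2 :=
  calc #{i ∈ s | ε ≤ |g i|} * ε ^ 2 = ∑ i ∈ s with ε ≤ |g i|, ε ^ 2 := by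
        rw [sum_const, nsmul_eq_mul]
    _ ≤ ∑ i ∈ s with ε ≤ |g i|, g i ^ 2 := sum_le_sum fun i hi => by
        rw [← sq_abs (g i)]
        exact pow_le_pow_left₀ hε (mem_filter.1 hi).2 2
    _ ≤ ∑ i ∈ s, g i ^ 2 :=
        sum_le_sum_of_subset_of_nonneg (filter_subset _ _) fun _ _ _ => sq_nonneg _

theorem sum_sq_card_filter_mul_pow_add_mul_pow_sub_le {F : Type*} [Field F] [Fintype F]
    [DecidableEq F] {a b : F} (ha : a ≠ 0) (hb : b ≠ 0)
    (f g : F) {r : ℕ} (hr : r ≤ orderOf g) :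
    ∑ c, ((#{p ∈ range (orderOf f) ×ˢ range r | a * f ^ p.1 + b * g ^ p.2 = c} : ℝ) -
      r * orderOf f / Fintype.card F) ^ 2 ≤ Fintype.card F * r := by
  set ψ := AddChar.FiniteField.primitiveChar_to_Complex F
  have hψ : ψ.IsPrimitive := AddChar.FiniteField.primitiveChar_to_Complex_isPrimitive F
  set S : F → ℂ := fun u => ∑ x ∈ range (orderOf f), ψ (u * f ^ x)
  set T : F → ℂ := fun u => ∑ y ∈ range r, ψ (u * g ^ y)
  have factor (u : F) :
      ∑ p ∈ range (orderOf f) ×ˢ range r, ψ (u * (a * f ^ p.1 + b * g ^ p.2)) =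
        S (u * a) * T (u * b) := by
    simp only [S, T, sum_product, sum_mul_sum, mul_add, AddChar.map_add_eq_mul, mul_assoc]
  have energy : ∑ u ∈ univ.erase 0, ‖S (u * a) * T (u * b)‖ ^ 2 ≤
      Fintype.card F * (Fintype.card F * r) :=
    calc ∑ u ∈ univ.erase 0, ‖S (u * a) * T (u * b)‖ ^ 2
        ≤ ∑ u ∈ univ.erase 0, Fintype.card F * ‖T (u * b)‖ ^ 2 := sum_le_sum fun u hu => by
          rw [norm_mul, mul_pow]
          exact mul_le_mul_of_nonneg_right (AddChar.norm_sq_sum_range_orderOf_le hψ f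
            (mul_ne_zero (ne_of_mem_erase hu) ha)) (by positivity)
      _ ≤ ∑ u, Fintype.card F * ‖T (u * b)‖ ^ 2 :=
          sum_le_univ_sum_of_nonneg fun _ => by positivity
      _ = Fintype.card F * (Fintype.card F * r) := by
          rw [← mul_sum, Fintype.sum_equiv (Equiv.mulRight₀ b hb) (fun u => ‖T (u * b)‖ ^ 2)
            (fun u => ‖T u‖ ^ 2) fun _ => rfl, AddChar.sum_norm_sq_sum_range_pow hψ g hr]
  have variance := AddChar.card_mul_sum_sq_card_filter_sub hψ (range (orderOf f) ×ˢ range r)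
    fun p => a * f ^ p.1 + b * g ^ p.2
  simp only [factor, card_product, card_range, Nat.cast_mul] at variance
  rw [mul_comm (orderOf f : ℝ)] at variance
  have hq : (0 : ℝ) < Fintype.card F := by positivity
  exact le_of_mul_le_mul_left (variance.trans_le energy) hq

theorem stmt_6_general (F : Type) [Field F] [Fintype F] [DecidableEq F]
    (a b f g : F) (s t r : ℕ)
    (ha : a ≠ 0) (hb : b ≠ 0)
    (hs : orderOf f = s) (ht : orderOf g = t) (hr : 0 < r) (hrt : r ≤ t)
    (δ : ℝ) (hδ : 0 < δ) :
    ((Finset.univ.filter (fun c : F =>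
        δ * Real.sqrt r ≤
          |((((Finset.range s ×ˢ Finset.range r).filter
                (fun p => a * f ^ p.1 + b * g ^ p.2 = c)).card : ℝ) -
            (r : ℝ) * s / (Fintype.card F : ℝ))|)).card : ℝ) ≤
      (Fintype.card F : ℝ) / δ ^ 2 := by
  subst hs ht
  have chebyshev :=
    (card_filter_le_abs_mul_sq_le_sum_sq univ _ (ε := δ * √r) (by positivity)).trans
      (sum_sq_card_filter_mul_pow_add_mul_pow_sub_le ha hb f g hrt)
  rw [mul_pow, Real.sq_sqrt (Nat.cast_nonneg r), ← mul_assoc] at chebyshev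
  rw [le_div_iff₀ (by positivity)]
  exact le_of_mul_le_mul_right chebyshev (by exact_mod_cast hr)

/-- For a finite field `F_q`, nonzero `a, b ∈ F_q`, nonzero `f, g ∈ F_q` of
multiplicative orders `s, t`, a positive integer `r ≤ t`, and `N_c` the number of
pairs `(x, y)`, `0 ≤ x ≤ s-1`, `0 ≤ y ≤ r-1`, with `a·f^x + b·g^y = c`:
for every real `δ > 0`, the number of `c ∈ F_q` with `|N_c − r·s/q| ≥ δ·√r`
is at most `q/δ²`. -/
theorem stmt_6 (F : Type) [Field F] [Fintype F] [DecidableEq F]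
    (a b f g : F) (s t r : ℕ)
    (ha : a ≠ 0) (hb : b ≠ 0) (hf : f ≠ 0) (hg : g ≠ 0)
    (hs : orderOf f = s) (ht : orderOf g = t) (hr : 0 < r) (hrt : r ≤ t)
    (δ : ℝ) (hδ : 0 < δ) :
    ((Finset.univ.filter (fun c : F =>
        δ * Real.sqrt r ≤
          |((((Finset.range s ×ˢ Finset.range r).filter
                (fun p => a * f ^ p.1 + b * g ^ p.2 = c)).card : ℝ) -
            (r : ℝ) * s / (Fintype.card F : ℝ))|)).card : ℝ) ≤
      (Fintype.card F : ℝ) / δ ^ 2 :=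
  stmt_6_general F a b f g s t r ha hb hs ht hr hrt δ hδ
end

section
/- Let F_q be a finite field with q elements, q ≥ 3, let a, b be nonzero elements of F_q, and let f and g be nonzero elements of F_q of multiplicative orders s and t, respectively. If r is an integer satisfying q^2 · s^{−2} · log q ≤ r ≤ t, then for all but at most q/log q elements c ∈ F_q*, there exist integers x and y with 0 ≤ x ≤ s−1 and 0 ≤ y ≤ r−1 such that a·f^x + b·g^y = c. -/
/-!
With `A = {a f^x : x < s}` and `B = {b g^y : y < r}`, orthogonality of additive characters gives
`q · #{(α, β) ∈ A × B | α + β = c} = ∑_ψ Â(ψ) B̂(ψ) ψ(-c)`, where the trivial character alone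
contributes `s r`. For an exceptional `c` the nontrivial characters must cancel it exactly, and
Parseval in `c` bounds the number of such `c` by `q · max_{ψ ≠ 0} |Â(ψ)|² · ∑_ψ |B̂(ψ)|² / (s r)²`.
Since `A` is a coset of a multiplicative subgroup, `|Â(ψ)|² ≤ q`, while `∑_ψ |B̂(ψ)|² = q r`;
so at most `q³ / (s² r) ≤ q / log q` values of `c` are missed.
-/

open scoped Classical
open Finset ComplexConjugate Pointwise

theorem sum_norm_sq_sum_mul_eq_of_orthogonal {ι X : Type*} [Fintype X] (e : ι → X → ℂ) (K : ℝ)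
    (T : Finset ι)
    (he : ∀ i ∈ T, ∀ j ∈ T, ∑ x, e i x * conj (e j x) = if i = j then (K : ℂ) else 0)
    (w : ι → ℂ) :
    ∑ x, ‖∑ i ∈ T, w i * e i x‖ ^ 2 = K * ∑ i ∈ T, ‖w i‖ ^ 2 := by
  have hC : ∑ x, (∑ i ∈ T, w i * e i x) * conj (∑ j ∈ T, w j * e j x) =
      K * ∑ i ∈ T, w i * conj (w i) :=
    calc _ = ∑ i ∈ T, ∑ j ∈ T, w i * conj (w j) * ∑ x, e i x * conj (e j x) := by
          simp_rw [map_sum, sum_mul_sum, mul_sum]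
          rw [sum_comm]
          refine sum_congr rfl fun i _ => ?_
          rw [sum_comm]
          refine sum_congr rfl fun j _ => sum_congr rfl fun x _ => ?_
          rw [map_mul]
          ring
      _ = ∑ i ∈ T, ∑ j ∈ T, if i = j then w i * conj (w j) * K else 0 :=
          sum_congr rfl fun i hi => sum_congr rfl fun j hj => by
            rw [he i hi j hj, mul_ite, mul_zero]
      _ = _ := by simp [mul_sum, mul_comm]
  apply Complex.ofReal_injective
  push_cast
  simpa only [← Complex.mul_conj'] using hC

theorem sum_range_orderOf_pow_add {M β : Type*} [Monoid M] [AddCancelCommMonoid β]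
    (x : M) (φ : M → β) (k : ℕ) :
    ∑ i ∈ range (orderOf x), φ (x ^ (i + k)) = ∑ i ∈ range (orderOf x), φ (x ^ i) := by
  induction k with
  | zero => rfl
  | succ k ih =>
    rw [← ih]
    have h := sum_range_succ' (fun i => φ (x ^ (i + k))) (orderOf x)
    rw [sum_range_succ, pow_add, pow_orderOf_eq_one, one_mul, zero_add] at h
    simpa only [← add_assoc, add_right_comm _ 1 k] using (add_right_cancel h).symm

theorem injOn_mul_pow_Iio_orderOf {M₀ : Type*} [MonoidWithZero M₀] [IsLeftCancelMulZero M₀]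
    {a : M₀} (ha : a ≠ 0) (f : M₀) : Set.InjOn (fun x : ℕ => a * f ^ x) (Set.Iio (orderOf f)) :=
  fun _ hx _ hy h => pow_injOn_Iio_orderOf hx hy (mul_left_cancel₀ ha h)

theorem orderOf_pos_of_ne_zero {G₀ : Type*} [GroupWithZero G₀] [Finite G₀] {x : G₀} (hx : x ≠ 0) :
    0 < orderOf x := by
  have h := orderOf_pos (Units.mk0 x hx)
  rwa [← orderOf_units, Units.val_mk0] at h

namespace AddChar

variable {G : Type*} [AddCommGroup G] [Fintype G]

theorem sum_norm_sq_sum_apply {ι : Type*} {u : ι → G} {I : Finset ι} (hu : Set.InjOn u I) :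
    ∑ ψ : AddChar G ℂ, ‖∑ i ∈ I, ψ (u i)‖ ^ 2 = Fintype.card G * #I := by
  have horth : ∀ i ∈ I, ∀ j ∈ I, ∑ ψ : AddChar G ℂ, ψ (u i) * conj (ψ (u j)) =
      if i = j then ((Fintype.card G : ℝ) : ℂ) else 0 := by
    intro i hi j hj
    simp_rw [← map_neg_eq_conj, ← map_add_eq_mul, sum_apply_eq_ite, ← sub_eq_add_neg, sub_eq_zero,
      hu.eq_iff hi hj, Complex.ofReal_natCast]
  simpa using sum_norm_sq_sum_mul_eq_of_orthogonal (fun i (ψ : AddChar G ℂ) => ψ (u i)) _ I horth 1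

theorem sum_norm_sq_sum_mul_apply (T : Finset (AddChar G ℂ)) (w : AddChar G ℂ → ℂ) :
    ∑ c, ‖∑ ψ ∈ T, w ψ * ψ c‖ ^ 2 = Fintype.card G * ∑ ψ ∈ T, ‖w ψ‖ ^ 2 := by
  have horth : ∀ ψ₁ ∈ T, ∀ ψ₂ ∈ T, ∑ c, ψ₁ c * conj (ψ₂ c) =
      if ψ₁ = ψ₂ then ((Fintype.card G : ℝ) : ℂ) else 0 := by
    intro ψ₁ _ ψ₂ _
    simp only [← map_neg_eq_conj, ← sub_apply]
    rw [sum_eq_ite]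
    simp only [sub_eq_zero, Complex.ofReal_natCast]
  exact sum_norm_sq_sum_mul_eq_of_orthogonal (fun (ψ : AddChar G ℂ) (c : G) => ψ c) _ T horth w

theorem sum_mul_sum_mul_apply_neg_eq_zero [DecidableEq G] {A B : Finset G} {c : G}
    (hc : c ∉ A + B) :
    ∑ ψ : AddChar G ℂ, (∑ α ∈ A, ψ α) * (∑ β ∈ B, ψ β) * ψ (-c) = 0 := by
  simp_rw [sum_mul_sum, sum_mul, ← map_add_eq_mul]
  rw [sum_comm]
  refine sum_eq_zero fun α hα => ?_
  rw [sum_comm]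
  refine sum_eq_zero fun β hβ => ?_
  rw [sum_apply_eq_ite, if_neg]
  rw [← sub_eq_add_neg, sub_eq_zero]
  rintro rfl
  exact hc (add_mem_add hα hβ)

theorem card_compl_add_mul_sq_le [DecidableEq G] {A B : Finset G} {K : ℝ} (hK : 0 ≤ K)
    (hA : ∀ ψ : AddChar G ℂ, ψ ≠ 0 → ‖∑ α ∈ A, ψ α‖ ^ 2 ≤ K) :
    #(A + B)ᶜ * ((#A : ℝ) * #B) ^ 2 ≤ Fintype.card G ^ 2 * K * #B := by
  set T : Finset (AddChar G ℂ) := univ.erase 0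
  set E : G → ℂ := fun c => ∑ ψ ∈ T, (∑ α ∈ A, ψ α) * (∑ β ∈ B, ψ β) * ψ (-c)
  -- the trivial character contributes `#A * #B`
  have hE : ∀ c ∈ (A + B)ᶜ, E c = -(#A * #B) := by
    intro c hc
    have h := sum_mul_sum_mul_apply_neg_eq_zero (mem_compl.1 hc)
    rw [← add_sum_erase _ _ (mem_univ 0)] at h
    simp only [zero_apply, sum_const, nsmul_one, mul_one] at h
    exact eq_neg_of_add_eq_zero_right h
  have hParseval : ∑ c, ‖E c‖ ^ 2 =
      Fintype.card G * ∑ ψ ∈ T, ‖(∑ α ∈ A, ψ α) * ∑ β ∈ B, ψ β‖ ^ 2 := by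
    rw [← sum_norm_sq_sum_mul_apply]
    exact Fintype.sum_equiv (Equiv.neg G) _ _ fun c => rfl
  calc (#(A + B)ᶜ : ℝ) * ((#A : ℝ) * #B) ^ 2 = ∑ c ∈ (A + B)ᶜ, ‖E c‖ ^ 2 := by
        rw [sum_congr rfl fun c hc => by rw [hE c hc], sum_const, nsmul_eq_mul]
        simp
    _ ≤ ∑ c, ‖E c‖ ^ 2 := sum_le_univ_sum_of_nonneg fun _ => by positivity
    _ ≤ Fintype.card G * ∑ ψ ∈ T, K * ‖∑ β ∈ B, ψ β‖ ^ 2 := by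
        rw [hParseval]
        gcongr with ψ hψ
        rw [norm_mul, mul_pow]
        exact mul_le_mul_of_nonneg_right (hA ψ (ne_of_mem_erase hψ)) (by positivity)
    _ ≤ Fintype.card G * (K * ∑ ψ : AddChar G ℂ, ‖∑ β ∈ B, ψ β‖ ^ 2) := by
        rw [← mul_sum]
        gcongr
        exact subset_univ _
    _ = Fintype.card G ^ 2 * K * #B := by
        have hB := sum_norm_sq_sum_apply (G := G) (u := id) (Set.injOn_id (B : Set G))
        simp only [id] at hB
        rw [hB]
        ring

variable {F : Type*} [Field F] [Fintype F]

theorem mulShift_bijective {ψ : AddChar F ℂ} (hψ : ψ ≠ 0) : Function.Bijective ψ.mulShift :=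
  (Fintype.bijective_iff_injective_and_card _).2
    ⟨to_mulShift_inj_of_isPrimitive (IsPrimitive.of_ne_one hψ), card_eq.symm⟩

theorem norm_sq_sum_apply_mul_pow_le {ψ : AddChar F ℂ} (hψ : ψ ≠ 0) {a f : F} (ha : a ≠ 0)
    (hf : f ≠ 0) : ‖∑ x ∈ range (orderOf f), ψ (a * f ^ x)‖ ^ 2 ≤ Fintype.card F := by
  set n := orderOf f
  set S : F → ℂ := fun v => ∑ x ∈ range n, ψ (v * f ^ x)
  have hn : 0 < n := orderOf_pos_of_ne_zero hf
  -- `S` is constant on the coset `a⟨f⟩`, and `v ↦ ψ.mulShift v` runs through all characters.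
  have hS : ∀ k, S (a * f ^ k) = S a := fun k => by
    simpa only [S, mul_assoc, ← pow_add, add_comm k] using
      sum_range_orderOf_pow_add f (fun y => ψ (a * y)) k
  have hmoment : ∑ v, ‖S v‖ ^ 2 = Fintype.card F * n := by
    have h := sum_norm_sq_sum_apply (G := F) (I := range n) (u := (f ^ ·))
      (by simpa [n] using pow_injOn_Iio_orderOf (x := f))
    rw [← (mulShift_bijective hψ).sum_comp] at h
    simpa [S, mulShift_apply] using h
  have hsum : n * ‖S a‖ ^ 2 ≤ Fintype.card F * n :=
    calc (n : ℝ) * ‖S a‖ ^ 2 = ∑ k ∈ range n, ‖S (a * f ^ k)‖ ^ 2 := by simp [hS]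
      _ = ∑ v ∈ (range n).image (a * f ^ ·), ‖S v‖ ^ 2 := by
          rw [sum_image]
          simpa [n] using injOn_mul_pow_Iio_orderOf ha f
      _ ≤ ∑ v, ‖S v‖ ^ 2 := sum_le_univ_sum_of_nonneg fun _ => by positivity
      _ = Fintype.card F * n := hmoment
  have hn' : (0 : ℝ) < n := by exact_mod_cast hn
  nlinarith

end AddChar

theorem stmt_7_general (F : Type) [Field F] [Fintype F] [DecidableEq F]
    (hq : 3 ≤ Fintype.card F)
    (a b f g : F) (s t r : ℕ)
    (ha : a ≠ 0) (hb : b ≠ 0) (hf : f ≠ 0)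
    (hs : orderOf f = s) (ht : orderOf g = t)
    (hr : (Fintype.card F : ℝ) ^ 2 * ((s : ℝ) ^ 2)⁻¹ * Real.log (Fintype.card F)
        ≤ (r : ℝ))
    (hrt : r ≤ t) :
    ((Finset.univ.filter (fun c : F => c ≠ 0 ∧
        ¬ ∃ x y : ℕ, x < s ∧ y < r ∧ a * f ^ x + b * g ^ y = c)).card : ℝ) ≤
      (Fintype.card F : ℝ) / Real.log (Fintype.card F) := by
  set A := (range s).image (a * f ^ ·)
  set B := (range r).image (b * g ^ ·)
  have hinjA : Set.InjOn (a * f ^ ·) (range s : Set ℕ) := by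
    simpa [← hs] using injOn_mul_pow_Iio_orderOf ha f
  have hinjB : Set.InjOn (b * g ^ ·) (range r : Set ℕ) :=
    (injOn_mul_pow_Iio_orderOf hb g).mono (by simpa [ht] using hrt)
  have hsub : univ.filter (fun c : F => c ≠ 0 ∧
      ¬ ∃ x y : ℕ, x < s ∧ y < r ∧ a * f ^ x + b * g ^ y = c) ⊆ (A + B)ᶜ := by
    intro c hc
    simpa [A, B, mem_add] using (mem_filter.1 hc).2.2
  have hcompl := AddChar.card_compl_add_mul_sq_le (A := A) (B := B) (Nat.cast_nonneg _)
    fun ψ hψ => by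
      rw [sum_image hinjA, ← hs]
      exact AddChar.norm_sq_sum_apply_mul_pow_le hψ ha hf
  rw [card_image_of_injOn hinjA, card_image_of_injOn hinjB, card_range, card_range] at hcompl
  have hq1 : (1 : ℝ) < Fintype.card F := Nat.one_lt_cast.2 (by omega)
  have hlog := Real.log_pos hq1
  have hs0 : (0 : ℝ) < s := by exact_mod_cast hs ▸ orderOf_pos_of_ne_zero hf
  rw [mul_right_comm, ← div_eq_mul_inv, div_le_iff₀ (by positivity)] at hr
  have hr0 : (0 : ℝ) < r := by nlinarith [mul_pos (pow_pos (zero_lt_one.trans hq1) 2) hlog]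
  rw [le_div_iff₀ hlog]
  refine (mul_le_mul_of_nonneg_right (Nat.cast_le.2 (card_le_card hsub)) hlog.le).trans ?_
  refine le_of_mul_le_mul_left ?_ (mul_pos (pow_pos (zero_lt_one.trans hq1) 2) hr0)
  linear_combination (mul_le_mul_of_nonneg_left hr (by positivity : (0 : ℝ) ≤ #(A + B)ᶜ * r)) +
    hcompl

/-- For a finite field `F_q` with `q ≥ 3`, nonzero `a, b ∈ F_q`, nonzero
`f, g ∈ F_q` of multiplicative orders `s, t`, and an integer `r` with
`q²·s⁻²·log q ≤ r ≤ t`: for all but at most `q/log q` elements `c ∈ F_q*`,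
there exist integers `x, y` with `0 ≤ x ≤ s-1`, `0 ≤ y ≤ r-1` and
`a·f^x + b·g^y = c`. -/
theorem stmt_7 (F : Type) [Field F] [Fintype F] [DecidableEq F]
    (hq : 3 ≤ Fintype.card F)
    (a b f g : F) (s t r : ℕ)
    (ha : a ≠ 0) (hb : b ≠ 0) (hf : f ≠ 0) (hg : g ≠ 0)
    (hs : orderOf f = s) (ht : orderOf g = t)
    (hr : (Fintype.card F : ℝ) ^ 2 * ((s : ℝ) ^ 2)⁻¹ * Real.log (Fintype.card F)
        ≤ (r : ℝ))
    (hrt : r ≤ t) :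
    ((Finset.univ.filter (fun c : F => c ≠ 0 ∧
        ¬ ∃ x y : ℕ, x < s ∧ y < r ∧ a * f ^ x + b * g ^ y = c)).card : ℝ) ≤
      (Fintype.card F : ℝ) / Real.log (Fintype.card F) :=
  stmt_7_general F hq a b f g s t r ha hb hf hs ht hr hrt
end
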